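/- Let (X, ↪, P) be a primal-proximity space and A, B ⊆ X. If B ̸↪ A, then B^↪ ̸↪ A^↪, where A^↪ := {x ∈ X : {x} ↪ A}. -/

import Mathlib

open Set

/-- A collection `P` of subsets of `X` is a *primal* on `X`. -/
def IsPrimalOn {X : Type*} (P : Set (Set X)) : Prop :=
  (Set.univ : Set X) ∉ P ∧
  (∀ A B : Set X, A ∈ P → B ⊆ A → B ∈ P) ∧
  (∀ A B : Set X, A ∩ B ∈ P → A ∈ P ∨ B ∈ P)

/-- A binary relation `r` on the power set of `X` is a *primal-proximity* with
respect to a primal `P` on `X`. -/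
def IsPrimalProximity {X : Type*} (P : Set (Set X)) (r : Set X → Set X → Prop) : Prop :=
  (∀ A B : Set X, r A B → r B A) ∧
  (∀ A B C : Set X, r A (B ∪ C) ↔ (r A B ∨ r A C)) ∧
  (∀ A : Set X, Aᶜ ∉ P → ∀ B : Set X, ¬ r A B) ∧
  (∀ A B : Set X, (A ∩ B)ᶜ ∈ P → r A B) ∧
  (∀ A B : Set X, ¬ r A B →
    ∃ C D : Set X, ¬ r A Cᶜ ∧ ¬ r Dᶜ B ∧ (C ∩ D)ᶜ ∉ P)

/-- The point-primal proximity of `A`: `A^↪ = {x | {x} ↪ A}`. -/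
def ppp {X : Type*} (r : Set X → Set X → Prop) (A : Set X) : Set X :=
  {x : X | r {x} A}

/-! If `E ̸↪ F`, axiom (5) gives `C, D` with `E ̸↪ Cᶜ`, `Dᶜ ̸↪ F` and `(C ∩ D)ᶜ ∉ P`.
Every `x ∈ F^↪` lies in `D`, since otherwise `{x} ⊆ Dᶜ` would give `Dᶜ ↪ F`; and `E ̸↪ C ∩ D`
by axiom (3). Hence `E ̸↪ Cᶜ ∪ (C ∩ D) ⊇ D ⊇ F^↪`. Applying this once on each side,
using symmetry, turns `B ̸↪ A` into `B^↪ ̸↪ A^↪`. -/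

namespace IsPrimalProximity

variable {X : Type*} {P : Set (Set X)} {r : Set X → Set X → Prop}

theorem symm (hr : IsPrimalProximity P r) {A B : Set X} (h : r A B) : r B A :=
  hr.1 A B h

theorem mono_right (hr : IsPrimalProximity P r) {A B B' : Set X} (hB : B ⊆ B') (h : r A B) :
    r A B' := by
  simpa only [union_eq_self_of_subset_left hB] using (hr.2.1 A B B').mpr (Or.inl h)

theorem mono_left (hr : IsPrimalProximity P r) {A A' B : Set X} (hA : A ⊆ A') (h : r A B) :
    r A' B :=
  hr.symm (hr.mono_right hA (hr.symm h))

theorem not_right_of_compl_notMem (hr : IsPrimalProximity P r) {A B : Set X} (hB : Bᶜ ∉ P) :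
    ¬ r A B :=
  fun h => hr.2.2.1 B hB A (hr.symm h)

theorem ppp_subset_of_not_compl (hr : IsPrimalProximity P r) {D F : Set X} (hD : ¬ r Dᶜ F) :
    ppp r F ⊆ D := by
  intro x hx
  by_contra hxD
  exact hD (hr.mono_left (singleton_subset_iff.mpr hxD) hx)

theorem not_ppp_right (hr : IsPrimalProximity P r) {E F : Set X} (h : ¬ r E F) :
    ¬ r E (ppp r F) := by
  obtain ⟨C, D, hC, hD, hCD⟩ := hr.2.2.2.2 E F h
  have hE : ¬ r E (Cᶜ ∪ (C ∩ D)) := by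
    rw [hr.2.1]
    exact not_or_intro hC (hr.not_right_of_compl_notMem hCD)
  refine fun hF => hE (hr.mono_right (fun x hx => ?_) hF)
  have hxD : x ∈ D := hr.ppp_subset_of_not_compl hD hx
  by_cases hxC : x ∈ C
  · exact Or.inr ⟨hxC, hxD⟩
  · exact Or.inl hxC

end IsPrimalProximity

theorem stmt_6_general {X : Type*} (P : Set (Set X)) (r : Set X → Set X → Prop)
    (hr : IsPrimalProximity P r)
    (A B : Set X) (h : ¬ r B A) :
    ¬ r (ppp r B) (ppp r A) := by
  have hBA : ¬ r (ppp r A) B := fun h' => hr.not_ppp_right h (hr.symm h')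
  exact fun h' => hr.not_ppp_right hBA (hr.symm h')

theorem stmt_6 {X : Type*} [Nonempty X] (P : Set (Set X)) (r : Set X → Set X → Prop)
    (hP : IsPrimalOn P) (hr : IsPrimalProximity P r)
    (A B : Set X) (h : ¬ r B A) :
    ¬ r (ppp r B) (ppp r A) :=
  stmt_6_general P r hr A B h
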